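/- The Cayley graph of the Pauli group P(1) with respect to the connection set {X, Y, Z} is isomorphic (as a simple graph) to the Möbius–Kantor graph MK. -/

import Mathlib

open Matrix Complex

/-- The underlying relation of the Möbius–Kantor graph `GP(8,3)`. -/
def mkRel (v w : ZMod 8 × Fin 2) : Bool :=
  (v.2 == 0 && w.2 == 0 && (w.1 == v.1 + 1 || v.1 == w.1 + 1)) ||
  ((v.2 == 0 && w.2 == 1 || v.2 == 1 && w.2 == 0) && v.1 == w.1) ||
  (v.2 == 1 && w.2 == 1 && (w.1 == v.1 + 3 || v.1 == w.1 + 3))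

/-- The Möbius–Kantor graph, i.e. the generalized Petersen graph `GP(8,3)`. -/
def MK : SimpleGraph (ZMod 8 × Fin 2) where
  Adj v w := mkRel v w = true
  symm := ⟨by intro v w; revert v w; decide⟩
  loopless := ⟨by intro v; revert v; decide⟩

/-- The Cayley graph of a group `G` with respect to a connection set `S`
not containing `1` and closed under inverses. -/
def cayleyGraph {G : Type*} [Group G] (S : Set G)
    (h1 : (1 : G) ∉ S) (hinv : ∀ s ∈ S, s⁻¹ ∈ S) : SimpleGraph G where
  Adj x y := x⁻¹ * y ∈ S
  symm := ⟨by
    intro x y h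
    have := hinv _ h
    simpa [_root_.mul_inv_rev] using this⟩
  loopless := ⟨by
    intro x h
    simp only [inv_mul_cancel] at h
    exact h1 h⟩

/-- The Pauli matrix `X`. -/
def pauliX : Matrix (Fin 2) (Fin 2) ℂ := !![0, 1; 1, 0]
def pauliY : Matrix (Fin 2) (Fin 2) ℂ := !![0, -I; I, 0]
def pauliZ : Matrix (Fin 2) (Fin 2) ℂ := !![1, 0; 0, -1]

lemma pauliX_sq : pauliX * pauliX = 1 := by
  simp [pauliX, Matrix.mul_fin_two, Matrix.one_fin_two]
lemma pauliY_sq : pauliY * pauliY = 1 := by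
  simp [pauliY, Matrix.mul_fin_two, Matrix.one_fin_two, Complex.I_mul_I]
lemma pauliZ_sq : pauliZ * pauliZ = 1 := by
  simp [pauliZ, Matrix.mul_fin_two, Matrix.one_fin_two]

def Xu : Matrix.GeneralLinearGroup (Fin 2) ℂ := ⟨pauliX, pauliX, pauliX_sq, pauliX_sq⟩
def Yu : Matrix.GeneralLinearGroup (Fin 2) ℂ := ⟨pauliY, pauliY, pauliY_sq, pauliY_sq⟩
def Zu : Matrix.GeneralLinearGroup (Fin 2) ℂ := ⟨pauliZ, pauliZ, pauliZ_sq, pauliZ_sq⟩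

/-- The Pauli group `P(1)`: the subgroup of `GL(2,ℂ)` generated by the Pauli matrices. -/
def P1 : Subgroup (Matrix.GeneralLinearGroup (Fin 2) ℂ) := Subgroup.closure {Xu, Yu, Zu}

/-- `X`, `Y`, `Z` as elements of the Pauli group. -/
def XP : P1 := ⟨Xu, Subgroup.subset_closure (by simp)⟩
def YP : P1 := ⟨Yu, Subgroup.subset_closure (by simp)⟩
def ZP : P1 := ⟨Zu, Subgroup.subset_closure (by simp)⟩

/-!
Every element of `P(1)` is uniquely `i^a X^p Z^q` with `a ∈ ℤ/4`, `p, q ∈ ℤ/2`, and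
`Z X = -X Z`, so `P(1)` is isomorphic to the group of such triples with a twisted
multiplication, and Cayley graphs transport along group isomorphisms. In the Cayley graph,
the closed walk `XYXYXYXY` (note `XY = iZ` has order 4) is the outer 8-cycle, the `Z`-edges
are the spokes, and since `Z (XYX) Z = Y` and `Z (YXY) Z = X`, the inner vertices three steps
apart are adjacent: this is `GP(8,3)`, which a finite computation in the model confirms.
-/

section CayleyGraph

variable {G H : Type*} [Group G] [Group H] {S : Set G} {T : Set H}

theorem one_notMem_of_preimage_eq (f : G →* H) (hST : f ⁻¹' T = S) (h1 : (1 : G) ∉ S) :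
    (1 : H) ∉ T :=
  fun h => h1 (hST ▸ show f 1 ∈ T by rwa [map_one])

theorem inv_mem_of_preimage_eq (e : G ≃* H) (hST : e ⁻¹' T = S) (hinv : ∀ s ∈ S, s⁻¹ ∈ S) :
    ∀ t ∈ T, t⁻¹ ∈ T := by
  intro t ht
  have hs : e.symm t ∈ S := hST ▸ show e (e.symm t) ∈ T by rwa [e.apply_symm_apply]
  have := hST ▸ hinv _ hs
  rwa [Set.mem_preimage, map_inv, e.apply_symm_apply] at this

def cayleyGraphIsoOfMulEquiv (e : G ≃* H) (hST : e ⁻¹' T = S) {h1 : (1 : G) ∉ S}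
    {hinv : ∀ s ∈ S, s⁻¹ ∈ S} {h1' : (1 : H) ∉ T} {hinv' : ∀ t ∈ T, t⁻¹ ∈ T} :
    cayleyGraph S h1 hinv ≃g cayleyGraph T h1' hinv' where
  toEquiv := e.toEquiv
  map_rel_iff' {x y} := by
    change (e x)⁻¹ * e y ∈ T ↔ x⁻¹ * y ∈ S
    rw [← hST, Set.mem_preimage, map_mul, map_inv]

end CayleyGraph

/-- `⟨a, p, q⟩` stands for `i^a X^p Z^q`; the phase correction `2 q p'` in the product comes
from `Z^q X^p' = (-1)^(q p') X^p' Z^q`. -/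
structure PauliTriple where
  phase : ZMod 4
  x : ZMod 2
  z : ZMod 2
deriving DecidableEq, Fintype

namespace PauliTriple

instance : Mul PauliTriple :=
  ⟨fun g h => ⟨g.phase + h.phase + ((2 * g.z.val * h.x.val : ℕ) : ZMod 4), g.x + h.x, g.z + h.z⟩⟩

instance : One PauliTriple := ⟨⟨0, 0, 0⟩⟩

instance : Inv PauliTriple :=
  ⟨fun g => ⟨-g.phase + ((2 * g.x.val * g.z.val : ℕ) : ZMod 4), g.x, g.z⟩⟩

instance : Group PauliTriple where
  mul_assoc := by decide +kernel
  one_mul := by decide +kernel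
  mul_one := by decide +kernel
  inv_mul_cancel := by decide +kernel

def X : PauliTriple := ⟨0, 1, 0⟩
def Y : PauliTriple := ⟨1, 1, 1⟩
def Z : PauliTriple := ⟨0, 0, 1⟩

end PauliTriple

noncomputable def scalarI : GL (Fin 2) ℂ :=
  Matrix.GeneralLinearGroup.scalar (Fin 2) (Units.mk0 I I_ne_zero)

theorem scalarI_pow_four : scalarI ^ 4 = 1 := by
  rw [scalarI, ← map_pow, ← map_one (Matrix.GeneralLinearGroup.scalar (Fin 2))]
  congr 1
  ext
  simp

theorem commute_scalarI (g : GL (Fin 2) ℂ) : Commute scalarI g :=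
  Matrix.GeneralLinearGroup.scalar_commute _ g

theorem Xu_sq : Xu ^ 2 = 1 := Units.ext (by rw [Units.val_pow_eq_pow_val, sq]; exact pauliX_sq)

theorem Zu_sq : Zu ^ 2 = 1 := Units.ext (by rw [Units.val_pow_eq_pow_val, sq]; exact pauliZ_sq)

theorem Zu_mul_Xu : Zu * Xu = scalarI ^ 2 * (Xu * Zu) := by
  ext i j
  fin_cases i <;> fin_cases j <;>
    simp [scalarI, Xu, Zu, pauliX, pauliZ, sq, Matrix.mul_apply, Fin.sum_univ_two]

theorem Yu_eq_scalarI_mul : Yu = scalarI * (Xu * Zu) := by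
  ext i j
  fin_cases i <;> fin_cases j <;>
    simp [scalarI, Xu, Zu, Yu, pauliX, pauliZ, pauliY, Matrix.mul_apply, Fin.sum_univ_two]

theorem scalarI_eq_Xu_mul_Yu_mul_Zu : scalarI = Xu * Yu * Zu := by
  ext i j
  fin_cases i <;> fin_cases j <;>
    simp [scalarI, Xu, Zu, Yu, pauliX, pauliZ, pauliY, Matrix.mul_apply, Fin.sum_univ_two]

theorem Zu_pow_mul_Xu_pow (q p : ZMod 2) :
    Zu ^ q.val * Xu ^ p.val = scalarI ^ (2 * q.val * p.val) * (Xu ^ p.val * Zu ^ q.val) := by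
  fin_cases q <;> fin_cases p <;> simp [ZMod.val, Zu_mul_Xu]

theorem Xu_pow_mul_Xu_pow (p p' : ZMod 2) : Xu ^ p.val * Xu ^ p'.val = Xu ^ (p + p').val := by
  rw [← pow_add, ZMod.val_add, ← pow_eq_pow_mod _ Xu_sq]

theorem Zu_pow_mul_Zu_pow (q q' : ZMod 2) : Zu ^ q.val * Zu ^ q'.val = Zu ^ (q + q').val := by
  rw [← pow_add, ZMod.val_add, ← pow_eq_pow_mod _ Zu_sq]

namespace PauliTriple

noncomputable def toGLFun (g : PauliTriple) : GL (Fin 2) ℂ :=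
  scalarI ^ g.phase.val * (Xu ^ g.x.val * Zu ^ g.z.val)

theorem toGLFun_mul (g h : PauliTriple) : toGLFun (g * h) = toGLFun g * toGLFun h := by
  set c := 2 * g.z.val * h.x.val
  have hphase : (g * h).phase.val = (g.phase.val + h.phase.val + c) % 4 := by
    change (g.phase + h.phase + (c : ZMod 4)).val = _
    rw [ZMod.val_add, ZMod.val_add, ZMod.val_natCast, Nat.add_mod (_ % 4), Nat.mod_mod,
      Nat.mod_mod, ← Nat.add_mod]
  have hxz : Xu ^ g.x.val * Zu ^ g.z.val * (Xu ^ h.x.val * Zu ^ h.z.val) =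
      scalarI ^ c * (Xu ^ (g * h).x.val * Zu ^ (g * h).z.val) := by
    calc _ = Xu ^ g.x.val * (Zu ^ g.z.val * Xu ^ h.x.val) * Zu ^ h.z.val := by group
      _ = Xu ^ g.x.val * (scalarI ^ c * (Xu ^ h.x.val * Zu ^ g.z.val)) * Zu ^ h.z.val := by
        rw [Zu_pow_mul_Xu_pow]
      _ = scalarI ^ c * ((Xu ^ g.x.val * Xu ^ h.x.val) * (Zu ^ g.z.val * Zu ^ h.z.val)) := by
        rw [← ((commute_scalarI _).pow_left c).left_comm]
        group
      _ = _ := by rw [Xu_pow_mul_Xu_pow, Zu_pow_mul_Zu_pow]; rfl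
  calc toGLFun (g * h)
      = scalarI ^ g.phase.val * scalarI ^ h.phase.val *
          (scalarI ^ c * (Xu ^ (g * h).x.val * Zu ^ (g * h).z.val)) := by
        rw [toGLFun, hphase, ← pow_eq_pow_mod _ scalarI_pow_four, pow_add, pow_add, mul_assoc]
    _ = toGLFun g * toGLFun h := by
        rw [toGLFun, toGLFun, ((commute_scalarI _).pow_left h.phase.val).symm.mul_mul_mul_comm,
          hxz]

noncomputable def toGL : PauliTriple →* GL (Fin 2) ℂ := MonoidHom.mk' toGLFun toGLFun_mul

theorem toGL_X : toGL X = Xu := by simp [toGL, toGLFun, X, ZMod.val_one]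

theorem toGL_Y : toGL Y = Yu := by
  simp [toGL, toGLFun, Y, ZMod.val_one, ZMod.val_one_eq_one_mod, Yu_eq_scalarI_mul]

theorem toGL_Z : toGL Z = Zu := by simp [toGL, toGLFun, Z, ZMod.val_one]

theorem range_toGL : toGL.range = P1 := by
  apply le_antisymm
  · rintro _ ⟨g, rfl⟩
    have hX : Xu ∈ P1 := Subgroup.subset_closure (by simp)
    have hY : Yu ∈ P1 := Subgroup.subset_closure (by simp)
    have hZ : Zu ∈ P1 := Subgroup.subset_closure (by simp)
    have hI : scalarI ∈ P1 := scalarI_eq_Xu_mul_Yu_mul_Zu ▸ mul_mem (mul_mem hX hY) hZ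
    exact mul_mem (pow_mem hI _) (mul_mem (pow_mem hX _) (pow_mem hZ _))
  · refine (Subgroup.closure_le _).2 ?_
    rintro _ (rfl | rfl | rfl)
    exacts [⟨X, toGL_X⟩, ⟨Y, toGL_Y⟩, ⟨Z, toGL_Z⟩]

theorem toGL_injective : Function.Injective toGL := by
  refine (injective_iff_map_eq_one toGL).2 fun ⟨a, p, q⟩ h => ?_
  -- the diagonal of `i^a X^p Z^q` is `(0, 0)` if `p = 1` and `(i^a, (-1)^q i^a)` if `p = 0`
  have hdiag := congrArg (fun g : GL (Fin 2) ℂ => ((g : Matrix (Fin 2) (Fin 2) ℂ) 0 0,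
    (g : Matrix (Fin 2) (Fin 2) ℂ) 1 1)) h
  fin_cases a <;> fin_cases p <;> fin_cases q <;> first
    | rfl
    | norm_num [toGL, toGLFun, scalarI, Xu, Zu, pauliX, pauliZ, ZMod.val, Matrix.mul_apply,
        pow_succ, Complex.ext_iff] at hdiag

noncomputable def mulEquivP1 : PauliTriple ≃* P1 :=
  (MonoidHom.ofInjective toGL_injective).trans (MulEquiv.subgroupCongr range_toGL)

theorem preimage_mulEquivP1 : mulEquivP1 ⁻¹' {XP, YP, ZP} = {X, Y, Z} := by
  have hX : XP = mulEquivP1 X := Subtype.ext toGL_X.symm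
  have hY : YP = mulEquivP1 Y := Subtype.ext toGL_Y.symm
  have hZ : ZP = mulEquivP1 Z := Subtype.ext toGL_Z.symm
  ext g
  simp [hX, hY, hZ, mulEquivP1.injective.eq_iff]

theorem one_notMem_XYZ : (1 : PauliTriple) ∉ ({X, Y, Z} : Set PauliTriple) := by decide

theorem inv_mem_XYZ :
    ∀ s ∈ ({X, Y, Z} : Set PauliTriple), s⁻¹ ∈ ({X, Y, Z} : Set PauliTriple) := by
  decide

def moebiusKantorLabel (v : ZMod 8 × Fin 2) : PauliTriple :=
  (X * Y) ^ (v.1.val / 2) * X ^ (v.1.val % 2) * Z ^ v.2.val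

theorem moebiusKantorLabel_bijective : Function.Bijective moebiusKantorLabel := by
  decide +kernel

theorem mkRel_iff_label_inv_mul_mem (v w : ZMod 8 × Fin 2) :
    mkRel v w = true ↔
      (moebiusKantorLabel v)⁻¹ * moebiusKantorLabel w ∈ ({X, Y, Z} : Set PauliTriple) := by
  revert v w
  decide +kernel

noncomputable def moebiusKantorIsoCayleyGraph :
    MK ≃g cayleyGraph ({X, Y, Z} : Set PauliTriple) one_notMem_XYZ inv_mem_XYZ where
  toEquiv := Equiv.ofBijective _ moebiusKantorLabel_bijective
  map_rel_iff' {v w} := (mkRel_iff_label_inv_mul_mem v w).symm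

end PauliTriple

/-- The Cayley graph of the Pauli group `P(1)` with respect to the connection set
`{X, Y, Z}` is isomorphic to the Möbius–Kantor graph. -/
theorem cayley_pauli_iso_moebiusKantor :
    ∃ (h1 : (1 : P1) ∉ ({XP, YP, ZP} : Set P1))
      (hinv : ∀ s ∈ ({XP, YP, ZP} : Set P1), s⁻¹ ∈ ({XP, YP, ZP} : Set P1)),
      Nonempty (cayleyGraph ({XP, YP, ZP} : Set P1) h1 hinv ≃g MK) := by
  open PauliTriple in
  exact ⟨one_notMem_of_preimage_eq mulEquivP1.toMonoidHom preimage_mulEquivP1 one_notMem_XYZ,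
    inv_mem_of_preimage_eq mulEquivP1 preimage_mulEquivP1 inv_mem_XYZ,
    ⟨(cayleyGraphIsoOfMulEquiv mulEquivP1 preimage_mulEquivP1).symm.trans
      moebiusKantorIsoCayleyGraph.symm⟩⟩
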